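/- Define f_y(t,y) = −∫_t^T (γ(s)/γ(t)) E[g̃_y(s, Y^{t,y}(s))] ds, where g̃_y(s,z) = −(r − z + a√(γ(s)))/σ² · 1_{r−z+a√(γ(s)) ≤ 0} − (r − z − a√(γ(s)))/σ² · 1_{r−z−a√(γ(s)) ≥ 0}. Then f_y(t,y) > 0 for y < r and t ∈ [0,T), f_y(t,r) = 0 for all t, and f_y(t,y) < 0 for y > r and t ∈ [0,T). Moreover, for each fixed t ∈ [0,T), y ↦ f_y(t,y) is monotonically decreasing. -/

import Mathlib

open MeasureTheory ProbabilityTheory Set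
open scoped NNReal

/-!
With `x = z - r` and `A = a √γ(s)`, the integrand is `σ⁻²` times the soft-thresholding map
`x ↦ max (x - A) 0 + min (x + A) 0`, which is nondecreasing and odd. Standardising the Gaussian,
`f_y(t, y) = -(∫ₜᵀ Φ(y - r, s) ds) / σ²` with `Φ(x, s) = c · E[soft_A(c x + e X)]`, `X ~ N(0, 1)`,
`c = γ(s)/γ(t) > 0` and `e > 0` for `s > t`. Oddness and the symmetry of `X` give `Φ(0, s) = 0`;
since the soft threshold has slope one beyond `A` and `X` charges every half-line, `x ↦ Φ(x, s)` is
strictly increasing. So `y ↦ ∫ₜᵀ Φ(y - r, s) ds` is strictly increasing and vanishes at `y = r`.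
-/

noncomputable def softThreshold (A x : ℝ) : ℝ := max (x - A) 0 + min (x + A) 0

lemma softThreshold_monotone (A : ℝ) : Monotone (softThreshold A) := fun x y hxy => by
  unfold softThreshold
  gcongr

lemma softThreshold_neg (A x : ℝ) : softThreshold A (-x) = -softThreshold A x := by
  unfold softThreshold
  rw [show -x - A = -(x + A) by ring, show -x + A = -(x - A) by ring, ← neg_zero, max_neg_neg,
    min_neg_neg, neg_zero]
  ring

lemma abs_softThreshold_le {A : ℝ} (hA : 0 ≤ A) (x : ℝ) : |softThreshold A x| ≤ |x| := by
  unfold softThreshold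
  rcases le_total x (-A) with h | h
  · rw [max_eq_right (by linarith), min_eq_left (by linarith), zero_add,
      abs_of_nonpos (by linarith), abs_of_nonpos (by linarith)]
    linarith
  rcases le_total x A with h' | h'
  · rw [max_eq_right (by linarith), min_eq_right (by linarith), add_zero, abs_zero]
    exact abs_nonneg x
  · rw [max_eq_left (by linarith), min_eq_right (by linarith), add_zero,
      abs_of_nonneg (by linarith), abs_of_nonneg (by linarith)]
    linarith

lemma softThreshold_of_le {A x : ℝ} (hA : 0 ≤ A) (hx : A ≤ x) : softThreshold A x = x - A := by
  rw [softThreshold, max_eq_left (by linarith), min_eq_right (by linarith), add_zero]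

@[fun_prop]
lemma Continuous.softThreshold {α : Type*} [TopologicalSpace α] {f g : α → ℝ} (hf : Continuous f)
    (hg : Continuous g) : Continuous fun x => _root_.softThreshold (f x) (g x) := by
  unfold _root_.softThreshold
  fun_prop

lemma softThreshold_div_eq_neg_ite (A x c : ℝ) :
    softThreshold A x / c =
      -((if -x + A ≤ 0 then (-x + A) / c else 0) + (if 0 ≤ -x - A then (-x - A) / c else 0)) := by
  unfold softThreshold
  split_ifs with h₁ h₂ h₂
  · rw [max_eq_left (by linarith), min_eq_left (by linarith)]; ring
  · rw [max_eq_left (by linarith), min_eq_right (by linarith)]; ring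
  · rw [max_eq_right (by linarith), min_eq_left (by linarith)]; ring
  · rw [max_eq_right (by linarith), min_eq_right (by linarith)]; ring

lemma integrable_softThreshold_comp {A : ℝ} (hA : 0 ≤ A) {α : Type*} [MeasurableSpace α]
    {μ : Measure α} {f : α → ℝ} (hf : Integrable f μ) :
    Integrable (fun x => softThreshold A (f x)) μ :=
  hf.abs.mono' ((by fun_prop : Continuous (softThreshold A)).comp_aestronglyMeasurable hf.1)
    (ae_of_all _ fun x => abs_softThreshold_le hA (f x))

lemma Real.sqrt_coe_toNNReal (x : ℝ) : √(x.toNNReal : ℝ) = √x := by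
  rw [Real.sqrt, Real.sqrt, Real.toNNReal_coe]

section Gaussian

variable {μ : ℝ} {v : ℝ≥0}

lemma integrable_const_add_mul_gaussianReal (m e : ℝ) :
    Integrable (fun x => m + e * x) (gaussianReal μ v) :=
  (integrable_const m).add (((memLp_id_gaussianReal 1).integrable le_rfl).const_mul e)

lemma integral_gaussianReal_eq_integral_standard {g : ℝ → ℝ} (hg : Measurable g) :
    ∫ z, g z ∂gaussianReal μ v = ∫ x, g (μ + √v * x) ∂gaussianReal 0 1 := by
  have hstd : (gaussianReal 0 1).map (fun x => μ + √v * x) = gaussianReal μ v := by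
    rw [show (fun x => μ + √v * x) = (μ + ·) ∘ (√v * ·) from rfl,
      ← Measure.map_map (by fun_prop) (by fun_prop), gaussianReal_map_const_mul,
      gaussianReal_map_const_add]
    congr 1
    · ring
    · ext
      simp
  rw [← hstd, integral_map (by fun_prop) hg.aestronglyMeasurable]

lemma integral_gaussianReal_eq_zero_of_odd {f : ℝ → ℝ} (hf : ∀ x, f (-x) = -f x) :
    ∫ x, f x ∂gaussianReal 0 v = 0 := by
  have h := integral_map_equiv (MeasurableEquiv.neg ℝ) f (μ := gaussianReal 0 v)
  rw [show ⇑(MeasurableEquiv.neg ℝ) = fun x => -x from rfl, gaussianReal_map_neg, neg_zero] at h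
  simp only [hf, integral_neg] at h
  linarith

lemma integral_lt_integral_gaussianReal {f g : ℝ → ℝ} (hv : v ≠ 0)
    (hf : Integrable f (gaussianReal μ v)) (hg : Integrable g (gaussianReal μ v)) (hle : f ≤ g)
    {c : ℝ} (hlt : ∀ x, c < x → f x < g x) :
    ∫ x, f x ∂gaussianReal μ v < ∫ x, g x ∂gaussianReal μ v := by
  have hIoi : gaussianReal μ v (Ioi c) ≠ 0 := fun h => by
    simpa using gaussianReal_absolutelyContinuous' μ hv h
  have hsupp : Ioi c ⊆ Function.support (g - f) := fun x hx =>
    (sub_pos.2 (hlt x hx)).ne'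
  have hpos := (integral_pos_iff_support_of_nonneg (sub_nonneg.2 hle) (hg.sub hf)).2
    (pos_iff_ne_zero.2 fun h => hIoi (measure_mono_null hsupp h))
  rw [Pi.sub_def, integral_sub hg hf] at hpos
  linarith

end Gaussian

noncomputable def softGaussMean (A m e : ℝ) : ℝ :=
  ∫ x, softThreshold A (m + e * x) ∂gaussianReal 0 1

section SoftGaussMean

variable {A : ℝ}

lemma integrable_softThreshold_const_add_mul (hA : 0 ≤ A) (m e : ℝ) :
    Integrable (fun x => softThreshold A (m + e * x)) (gaussianReal 0 1) :=
  integrable_softThreshold_comp hA (integrable_const_add_mul_gaussianReal m e)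

lemma softGaussMean_monotone (hA : 0 ≤ A) (e : ℝ) : Monotone fun m => softGaussMean A m e :=
  fun m m' hm => integral_mono (integrable_softThreshold_const_add_mul hA m e)
    (integrable_softThreshold_const_add_mul hA m' e)
    fun x => softThreshold_monotone A (by linarith)

lemma softGaussMean_strictMono (hA : 0 ≤ A) {e : ℝ} (he : 0 < e) :
    StrictMono fun m => softGaussMean A m e := by
  intro m m' hm
  refine integral_lt_integral_gaussianReal one_ne_zero
    (integrable_softThreshold_const_add_mul hA m e) (integrable_softThreshold_const_add_mul hA m' e)
    (fun x => softThreshold_monotone A (by linarith)) (c := (A - m) / e) fun x hx => ?_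
  have hAx : A < m + e * x := by
    rw [div_lt_iff₀ he] at hx
    linarith
  rw [softThreshold_of_le hA hAx.le, softThreshold_of_le hA (by linarith)]
  linarith

lemma softGaussMean_zero (A e : ℝ) : softGaussMean A 0 e = 0 :=
  integral_gaussianReal_eq_zero_of_odd fun x => by
    rw [zero_add, zero_add, mul_neg, softThreshold_neg]

lemma abs_softGaussMean_le (hA : 0 ≤ A) (m e : ℝ) :
    |softGaussMean A m e| ≤ |m| + |e| * ∫ x, |x| ∂gaussianReal 0 1 := by
  have habs : Integrable (fun x : ℝ => |x|) (gaussianReal 0 1) :=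
    ((memLp_id_gaussianReal 1).integrable le_rfl).abs
  calc |softGaussMean A m e|
      ≤ ∫ x, |softThreshold A (m + e * x)| ∂gaussianReal 0 1 :=
        abs_integral_le_integral_abs
    _ ≤ ∫ x, (|m| + |e| * |x|) ∂gaussianReal 0 1 :=
        integral_mono (integrable_softThreshold_const_add_mul hA m e).abs
          ((integrable_const _).add (habs.const_mul _)) fun x =>
          (abs_softThreshold_le hA _).trans ((abs_add_le _ _).trans_eq (by rw [abs_mul]))
    _ = |m| + |e| * ∫ x, |x| ∂gaussianReal 0 1 := by
        rw [integral_add (integrable_const _) (habs.const_mul _), integral_const_mul]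
        simp

lemma Measurable.softGaussMean {α : Type*} [MeasurableSpace α] {A m e : α → ℝ}
    (hA : Measurable A) (hm : Measurable m) (he : Measurable e) :
    Measurable fun s => _root_.softGaussMean (A s) (m s) (e s) := by
  have hjoint : Measurable fun p : α × ℝ => softThreshold (A p.1) (m p.1 + e p.1 * p.2) := by
    fun_prop
  exact (hjoint.stronglyMeasurable.integral_prod_right' (ν := gaussianReal 0 1)).measurable

end SoftGaussMean

lemma intervalIntegral.integral_lt_integral_of_lt_on {f g : ℝ → ℝ} {a b : ℝ} (hab : a < b)
    (hf : IntervalIntegrable f volume a b) (hg : IntervalIntegrable g volume a b)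
    (hlt : ∀ x ∈ Ioo a b, f x < g x) : ∫ x in a..b, f x < ∫ x in a..b, g x := by
  have hpos := intervalIntegral.intervalIntegral_pos_of_pos_on (hg.sub hf)
    (fun x hx => sub_pos.2 (hlt x hx)) hab
  rw [intervalIntegral.integral_sub hg hf] at hpos
  linarith

/-- `σ²` times the `s`-integrand of `-f_y(t, y)`, as a function of `x = y - r`. -/
noncomputable def fyIntegrand (γ : ℝ → ℝ) (a σ t x s : ℝ) : ℝ :=
  γ s / γ t * softGaussMean (a * √(γ s)) (γ s / γ t * x) √(γ s ^ 2 * (s - t) / σ ^ 2)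

section FyIntegrand

variable {γ : ℝ → ℝ} {a σ t : ℝ}

lemma fyIntegrand_zero (s : ℝ) : fyIntegrand γ a σ t 0 s = 0 := by
  rw [fyIntegrand, mul_zero, softGaussMean_zero, mul_zero]

lemma fyIntegrand_strictMono (hγ : ∀ s, 0 ≤ s → 0 < γ s) (ha : 0 ≤ a) (hσ : σ ≠ 0) (ht : 0 ≤ t)
    {s : ℝ} (hs : t < s) :
    StrictMono fun x => fyIntegrand γ a σ t x s := by
  have hc : 0 < γ s / γ t := div_pos (hγ s (ht.trans hs.le)) (hγ t ht)
  have he : 0 < √(γ s ^ 2 * (s - t) / σ ^ 2) := by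
    have hγs := hγ s (ht.trans hs.le)
    have hst := sub_pos.2 hs
    positivity
  exact fun x x' hx => mul_lt_mul_of_pos_left
    (softGaussMean_strictMono (by positivity) he (mul_lt_mul_of_pos_left hx hc)) hc

lemma abs_fyIntegrand_le (hγ : ∀ s, 0 ≤ s → 0 < γ s) (hγ_anti : AntitoneOn γ (Ici 0))
    (ha : 0 ≤ a) (ht : 0 ≤ t) {T s : ℝ} (hs : s ∈ Icc t T) (x : ℝ) :
    |fyIntegrand γ a σ t x s|
      ≤ |x| + √(γ t ^ 2 * (T - t) / σ ^ 2) * ∫ w, |w| ∂gaussianReal 0 1 := by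
  have hγs := hγ s (ht.trans hs.1)
  have hγt := hγ t ht
  have hγst : γ s ≤ γ t := hγ_anti (mem_Ici.2 ht) (mem_Ici.2 (ht.trans hs.1)) hs.1
  have hc : 0 < γ s / γ t := div_pos hγs hγt
  have hc_le : γ s / γ t ≤ 1 := (div_le_one hγt).2 hγst
  have hst := sub_nonneg.2 hs.1
  have hsT := hs.2
  calc |fyIntegrand γ a σ t x s|
      = γ s / γ t *
          |softGaussMean (a * √(γ s)) (γ s / γ t * x) √(γ s ^ 2 * (s - t) / σ ^ 2)| := by
        rw [fyIntegrand, abs_mul, abs_of_pos hc]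
    _ ≤ 1 * (|γ s / γ t * x| +
          |√(γ s ^ 2 * (s - t) / σ ^ 2)| * ∫ w, |w| ∂gaussianReal 0 1) :=
        mul_le_mul hc_le (abs_softGaussMean_le (by positivity) _ _) (abs_nonneg _) zero_le_one
    _ ≤ |x| + √(γ t ^ 2 * (T - t) / σ ^ 2) * ∫ w, |w| ∂gaussianReal 0 1 := by
        rw [one_mul, abs_mul, abs_of_pos hc, abs_of_nonneg (Real.sqrt_nonneg _)]
        gcongr
        exact mul_le_of_le_one_left (abs_nonneg x) hc_le

lemma fyIntegrand_intervalIntegrable (hγ_meas : Measurable γ) (hγ : ∀ s, 0 ≤ s → 0 < γ s)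
    (hγ_anti : AntitoneOn γ (Ici 0)) (ha : 0 ≤ a) (ht : 0 ≤ t) {T : ℝ} (htT : t ≤ T) (x : ℝ) :
    IntervalIntegrable (fyIntegrand γ a σ t x) volume t T := by
  have hmeas : Measurable (fyIntegrand γ a σ t x) :=
    (hγ_meas.div_const _).mul (Measurable.softGaussMean (by fun_prop) (by fun_prop) (by fun_prop))
  refine (intervalIntegrable_const
    (c := |x| + √(γ t ^ 2 * (T - t) / σ ^ 2) * ∫ w, |w| ∂gaussianReal 0 1)).mono_fun'
    hmeas.aestronglyMeasurable (ae_restrict_of_forall_mem measurableSet_uIoc fun s hs => ?_)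
  rw [uIoc_of_le htT] at hs
  exact abs_fyIntegrand_le hγ hγ_anti ha ht (Ioc_subset_Icc_self hs) x

lemma strictMono_integral_fyIntegrand (hγ_meas : Measurable γ) (hγ : ∀ s, 0 ≤ s → 0 < γ s)
    (hγ_anti : AntitoneOn γ (Ici 0)) (ha : 0 ≤ a) (hσ : σ ≠ 0) (ht : 0 ≤ t) {T : ℝ} (htT : t < T) :
    StrictMono fun x => ∫ s in t..T, fyIntegrand γ a σ t x s := fun x x' hx =>
  intervalIntegral.integral_lt_integral_of_lt_on htT
    (fyIntegrand_intervalIntegrable hγ_meas hγ hγ_anti ha ht htT.le x)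
    (fyIntegrand_intervalIntegrable hγ_meas hγ hγ_anti ha ht htT.le x')
    fun _ hs => fyIntegrand_strictMono hγ ha hσ ht hs.1 hx

end FyIntegrand

theorem stmt_15_general (r a σ σ₀ T : ℝ) (ha : 0 ≤ a) (hσ : 0 < σ) (hσ₀ : 0 < σ₀)
    (γ : ℝ → ℝ) (hγ : ∀ s, γ s = ((σ₀ ^ 2)⁻¹ + s * (σ ^ 2)⁻¹)⁻¹)
    (gty : ℝ → ℝ → ℝ)
    (hgty : ∀ s z, gty s z =
      -((if r - z + a * Real.sqrt (γ s) ≤ 0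
          then (r - z + a * Real.sqrt (γ s)) / σ ^ 2 else 0)
        + (if 0 ≤ r - z - a * Real.sqrt (γ s)
          then (r - z - a * Real.sqrt (γ s)) / σ ^ 2 else 0)))
    (fy : ℝ → ℝ → ℝ)
    (hfy : ∀ t y, fy t y = -∫ s in t..T, (γ s / γ t) *
      ∫ z, gty s z ∂(gaussianReal ((γ s / γ t) * (y - r) + r)
        (Real.toNNReal ((γ s) ^ 2 * (s - t) / σ ^ 2)))) :
    (∀ t ∈ Ico (0 : ℝ) T, ∀ y : ℝ, (y < r → 0 < fy t y) ∧ (r < y → fy t y < 0)) ∧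
    (∀ t ∈ Icc (0 : ℝ) T, fy t r = 0) ∧
    (∀ t ∈ Ico (0 : ℝ) T, Antitone (fun y => fy t y)) := by
  have hγ_meas : Measurable γ := by
    rw [funext hγ]
    fun_prop
  have hγ_pos : ∀ s, 0 ≤ s → 0 < γ s := fun s hs => by
    rw [hγ]
    positivity
  have hγ_anti : AntitoneOn γ (Ici 0) := fun s (hs : 0 ≤ s) u _ hsu => by
    simp only [hγ]
    gcongr
  have hgty_eq : ∀ s, gty s = fun z => softThreshold (a * √(γ s)) (z - r) / σ ^ 2 := fun s => by
    ext z
    rw [hgty, ← neg_sub, softThreshold_div_eq_neg_ite]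
  have hfy_eq : ∀ t y, fy t y = -(∫ s in t..T, fyIntegrand γ a σ t (y - r) s) / σ ^ 2 := by
    intro t y
    rw [hfy, neg_div, ← intervalIntegral.integral_div]
    congr 1
    refine intervalIntegral.integral_congr fun s _ => ?_
    rw [hgty_eq, integral_gaussianReal_eq_integral_standard (by fun_prop), integral_div,
      fyIntegrand, ← mul_div_assoc, softGaussMean, Real.sqrt_coe_toNNReal]
    congr 3 with x
    rw [add_sub_right_comm, add_sub_cancel_right]
  have hΦ_zero : ∀ t, ∫ s in t..T, fyIntegrand γ a σ t 0 s = 0 := fun t => by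
    simp only [fyIntegrand_zero, intervalIntegral.integral_zero]
  have hΦ_strictMono : ∀ t ∈ Ico 0 T, StrictMono fun x => ∫ s in t..T, fyIntegrand γ a σ t x s :=
    fun t ht => strictMono_integral_fyIntegrand hγ_meas hγ_pos hγ_anti ha hσ.ne' ht.1 ht.2
  have hσ2 : 0 < σ ^ 2 := by positivity
  refine ⟨fun t ht y => ⟨fun hy => ?_, fun hy => ?_⟩, fun t _ => ?_, fun t ht y y' hy => ?_⟩
  · rw [hfy_eq]
    exact div_pos (neg_pos.2 ((hΦ_strictMono t ht (sub_neg.2 hy)).trans_eq (hΦ_zero t))) hσ2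
  · rw [hfy_eq]
    exact div_neg_of_neg_of_pos
      (neg_neg_of_pos ((hΦ_zero t).symm.trans_lt (hΦ_strictMono t ht (sub_pos.2 hy)))) hσ2
  · rw [hfy_eq, sub_self, hΦ_zero, neg_zero, zero_div]
  · simp only [hfy_eq]
    gcongr
    exact (hΦ_strictMono t ht).monotone (by linarith)

/-- with f_y(t,y) = −∫ₜᵀ (γ(s)/γ(t)) E[g̃_y(s, Y^{t,y}(s))] ds, where
Y^{t,y}(s) is Gaussian with mean (γ(s)/γ(t))(y−r)+r and variance γ(s)²(s−t)/σ²,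
one has f_y(t,y) > 0 for y < r and t ∈ [0,T), f_y(t,r) = 0 for all t ∈ [0,T],
f_y(t,y) < 0 for y > r and t ∈ [0,T), and y ↦ f_y(t,y) is monotonically decreasing
for each fixed t ∈ [0,T). -/
theorem stmt_15 (r a σ σ₀ T : ℝ) (ha : 0 ≤ a) (hσ : 0 < σ) (hσ₀ : 0 < σ₀) (hT : 0 < T)
    (γ : ℝ → ℝ) (hγ : ∀ s, γ s = ((σ₀ ^ 2)⁻¹ + s * (σ ^ 2)⁻¹)⁻¹)
    (gty : ℝ → ℝ → ℝ)
    (hgty : ∀ s z, gty s z =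
      -((if r - z + a * Real.sqrt (γ s) ≤ 0
          then (r - z + a * Real.sqrt (γ s)) / σ ^ 2 else 0)
        + (if 0 ≤ r - z - a * Real.sqrt (γ s)
          then (r - z - a * Real.sqrt (γ s)) / σ ^ 2 else 0)))
    (fy : ℝ → ℝ → ℝ)
    (hfy : ∀ t y, fy t y = -∫ s in t..T, (γ s / γ t) *
      ∫ z, gty s z ∂(gaussianReal ((γ s / γ t) * (y - r) + r)
        (Real.toNNReal ((γ s) ^ 2 * (s - t) / σ ^ 2)))) :
    (∀ t ∈ Ico (0 : ℝ) T, ∀ y : ℝ, (y < r → 0 < fy t y) ∧ (r < y → fy t y < 0)) ∧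
    (∀ t ∈ Icc (0 : ℝ) T, fy t r = 0) ∧
    (∀ t ∈ Ico (0 : ℝ) T, Antitone (fun y => fy t y)) :=
  stmt_15_general r a σ σ₀ T ha hσ hσ₀ γ hγ gty hgty fy hfy
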